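/- Let n be a positive even integer and let X be a random variable taking values in {0,1}^n whose joint distribution is (n/2)-wise independent. Then the support of X has size at least 2^n/(n+1). -/

import Mathlib

/-!
Expand `p` in the Walsh basis `χ_S(x) = ∏_{i ∈ S} (-1)^{x_i}`, with coefficients
`p̂(S) = ∑ₓ p(x) χ_S(x)`. `k`-wise independence makes `p̂(S) = 0` for `1 ≤ |S| ≤ k`, and
`p̂(∅) = 1`, so `∑_S (k + 1 - |S|) p̂(S)² ≤ k + 1`. Since `p ≥ 0`, flipping one coordinate shows
`∑_{S ∋ i} p̂(S)² ≤ 2^{n-1} ∑ₓ p(x)²` for every `i`, hence `∑_S |S| p̂(S)² ≤ (n/2) ∑_S p̂(S)²`.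
With Parseval, `∑_S p̂(S)² = 2^n ∑ₓ p(x)²`, this gives `2^n ∑ₓ p(x)² ≤ k + 1` once `n ≤ 2k`,
and Cauchy–Schwarz on the support turns it into `|supp p| ≥ 2^n / (k + 1)`.
-/

/-- `p` is the probability mass function of a `k`-wise independent random variable
taking values in `{0,1}^n`. -/
def KWiseIndep (n k : ℕ) (p : (Fin n → Bool) → ℝ) : Prop :=
  ∀ S : Finset (Fin n), S.card ≤ k → ∀ a : Fin n → Bool,
    (∑ x ∈ Finset.univ.filter fun x => ∀ i ∈ S, x i = a i, p x) = (1 / 2 : ℝ) ^ S.card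

open Finset

section Walsh

variable {ι : Type*}

def walsh (S : Finset ι) (x : ι → Bool) : ℝ :=
  ∏ i ∈ S, if x i then -1 else 1

theorem sum_walsh_mul_walsh [Fintype ι] (x y : ι → Bool) :
    ∑ S : Finset ι, walsh S x * walsh S y = if x = y then 2 ^ Fintype.card ι else 0 := by
  have hprod : ∀ S : Finset ι,
      walsh S x * walsh S y = ∏ i ∈ S, if x i = y i then (1 : ℝ) else -1 := fun S => by
    rw [walsh, walsh, ← prod_mul_distrib]
    refine prod_congr rfl fun i _ => ?_
    cases x i <;> cases y i <;> norm_num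
  simp_rw [hprod, ← powerset_univ, ← prod_add_one]
  split_ifs with hxy
  · simp [hxy, one_add_one_eq_two]
  · obtain ⟨i, hi⟩ := Function.ne_iff.mp hxy
    exact prod_eq_zero (mem_univ i) (by simp [hi])

theorem walsh_eq_sum_powerset (S : Finset ι) (x : ι → Bool) :
    walsh S x = ∑ T ∈ S.powerset, (-2) ^ #T * ∏ i ∈ T, if x i then 1 else 0 := by
  have hfactor : ∀ i, (if x i then (-1 : ℝ) else 1) = 1 + -2 * if x i then 1 else 0 :=
    fun i => by cases x i <;> norm_num
  simp_rw [walsh, hfactor, prod_one_add, prod_mul_distrib, prod_const]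

variable [DecidableEq ι]

def flipCoord (i : ι) (x : ι → Bool) : ι → Bool :=
  Function.update x i (!x i)

theorem flipCoord_involutive (i : ι) : Function.Involutive (flipCoord i) := fun x => by
  simp [flipCoord]

theorem walsh_flipCoord (S : Finset ι) (i : ι) (x : ι → Bool) :
    walsh S (flipCoord i x) = if i ∈ S then -walsh S x else walsh S x := by
  have hfar : ∀ T : Finset ι, i ∉ T → walsh T (flipCoord i x) = walsh T x := fun T hT =>
    prod_congr rfl fun j hj => by
      rw [flipCoord, Function.update_of_ne (ne_of_mem_of_not_mem hj hT)]
  split_ifs with hi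
  · rw [walsh, walsh, ← mul_prod_erase S _ hi, ← mul_prod_erase S _ hi]
    have := hfar _ (notMem_erase i S)
    rw [walsh, walsh] at this
    rw [this, flipCoord, Function.update_self]
    cases x i <;> simp
  · exact hfar S hi

variable [Fintype ι]

def walshCoeff (f : (ι → Bool) → ℝ) (S : Finset ι) : ℝ :=
  ∑ x, f x * walsh S x

theorem sum_walshCoeff_mul_walshCoeff (f g : (ι → Bool) → ℝ) :
    ∑ S : Finset ι, walshCoeff f S * walshCoeff g S
      = 2 ^ Fintype.card ι * ∑ x, f x * g x := by
  calc ∑ S : Finset ι, walshCoeff f S * walshCoeff g S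
      = ∑ x, ∑ y, f x * g y * ∑ S : Finset ι, walsh S x * walsh S y := by
        simp_rw [walshCoeff, sum_mul_sum, mul_sum]
        rw [sum_comm]
        refine sum_congr rfl fun x _ => ?_
        rw [sum_comm]
        refine sum_congr rfl fun y _ => sum_congr rfl fun S _ => by ring
    _ = 2 ^ Fintype.card ι * ∑ x, f x * g x := by
        simp_rw [sum_walsh_mul_walsh, mul_ite, mul_zero, sum_ite_eq, mem_univ, if_true,
          mul_sum]
        exact sum_congr rfl fun x _ => by ring

theorem walshCoeff_sub (f g : (ι → Bool) → ℝ) (S : Finset ι) :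
    walshCoeff (f - g) S = walshCoeff f S - walshCoeff g S := by
  simp only [walshCoeff, Pi.sub_apply, sub_mul, sum_sub_distrib]

theorem walshCoeff_comp_flipCoord (f : (ι → Bool) → ℝ) (i : ι) (S : Finset ι) :
    walshCoeff (f ∘ flipCoord i) S = if i ∈ S then -walshCoeff f S else walshCoeff f S := by
  have hswap : walshCoeff (f ∘ flipCoord i) S = ∑ x, f x * walsh S (flipCoord i x) := by
    rw [walshCoeff, ← Equiv.sum_comp (flipCoord_involutive i).toPerm]
    simp [flipCoord_involutive i _]
  rw [hswap, walshCoeff]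
  simp_rw [walsh_flipCoord]
  split_ifs <;> simp [sum_neg_distrib]

theorem two_mul_sum_walshCoeff_sq_le {p : (ι → Bool) → ℝ} (hp : ∀ x, 0 ≤ p x) (i : ι) :
    2 * ∑ S with i ∈ S, walshCoeff p S ^ 2 ≤ 2 ^ Fintype.card ι * ∑ x, p x ^ 2 := by
  calc 2 * ∑ S with i ∈ S, walshCoeff p S ^ 2
      = ∑ S : Finset ι, walshCoeff p S * walshCoeff (p - p ∘ flipCoord i) S := by
        rw [sum_filter, mul_sum]
        refine sum_congr rfl fun S _ => ?_
        rw [walshCoeff_sub, walshCoeff_comp_flipCoord]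
        split_ifs <;> ring
    _ = 2 ^ Fintype.card ι * ∑ x, (p x ^ 2 - p x * p (flipCoord i x)) := by
        rw [sum_walshCoeff_mul_walshCoeff]
        simp only [Pi.sub_apply, Function.comp_apply, mul_sub, sq]
    _ ≤ 2 ^ Fintype.card ι * ∑ x, p x ^ 2 := by
        gcongr with x
        exact sub_le_self _ (mul_nonneg (hp x) (hp _))

theorem two_mul_sum_card_mul_walshCoeff_sq_le {p : (ι → Bool) → ℝ} (hp : ∀ x, 0 ≤ p x) :
    2 * ∑ S : Finset ι, #S * walshCoeff p S ^ 2
      ≤ Fintype.card ι * (2 ^ Fintype.card ι * ∑ x, p x ^ 2) := by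
  have hswap : ∑ S : Finset ι, #S * walshCoeff p S ^ 2
      = ∑ i, ∑ S with i ∈ S, walshCoeff p S ^ 2 := by
    simp_rw [sum_filter]
    rw [sum_comm]
    refine sum_congr rfl fun S _ => ?_
    rw [← sum_filter, filter_mem_eq_inter, univ_inter, sum_const, nsmul_eq_mul]
  rw [hswap, mul_sum, ← nsmul_eq_mul, ← card_univ, ← sum_const]
  exact sum_le_sum fun i _ => two_mul_sum_walshCoeff_sq_le hp i

end Walsh

namespace KWiseIndep

variable {n k : ℕ} {p : (Fin n → Bool) → ℝ}

theorem sum_eq_one (h : KWiseIndep n k p) : ∑ x, p x = 1 := by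
  simpa using h ∅ (Nat.zero_le k) fun _ => true

theorem walshCoeff_eq_zero (h : KWiseIndep n k p) {S : Finset (Fin n)} (hS : S.Nonempty)
    (hSk : #S ≤ k) : walshCoeff p S = 0 := by
  have hmarginal : ∀ T ∈ S.powerset,
      ∑ x, p x * (∏ i ∈ T, if x i then 1 else 0) = (1 / 2) ^ #T := fun T hT => by
    rw [← h T ((card_le_card (mem_powerset.mp hT)).trans hSk) fun _ => true, sum_filter]
    simp [prod_boole]
  calc walshCoeff p S
      = ∑ T ∈ S.powerset, (-2) ^ #T * ∑ x, p x * ∏ i ∈ T, if x i then 1 else 0 := by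
        simp_rw [walshCoeff, walsh_eq_sum_powerset, mul_sum]
        rw [sum_comm]
        exact sum_congr rfl fun T _ => sum_congr rfl fun x _ => mul_left_comm _ _ _
    _ = ∑ T ∈ S.powerset, ((-1 : ℤ) ^ #T : ℤ) := by
        push_cast
        refine sum_congr rfl fun T hT => ?_
        rw [hmarginal T hT, ← mul_pow]
        norm_num
    _ = 0 := by exact_mod_cast sum_powerset_neg_one_pow_card_of_nonempty hS

theorem sum_sub_card_mul_walshCoeff_sq_le (h : KWiseIndep n k p) :
    ∑ S : Finset (Fin n), ((k + 1 : ℝ) - #S) * walshCoeff p S ^ 2 ≤ k + 1 := by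
  have hterm : ∀ S : Finset (Fin n),
      ((k + 1 : ℝ) - #S) * walshCoeff p S ^ 2 ≤ if S = ∅ then (k + 1 : ℝ) else 0 := by
    intro S
    rcases S.eq_empty_or_nonempty with rfl | hS
    · simp [walshCoeff, walsh, h.sum_eq_one]
    rw [if_neg hS.ne_empty]
    rcases le_or_gt #S k with hSk | hkS
    · simp [h.walshCoeff_eq_zero hS hSk]
    · have : (k + 1 : ℝ) ≤ #S := by exact_mod_cast hkS
      exact mul_nonpos_of_nonpos_of_nonneg (by linarith) (sq_nonneg _)
  calc _ ≤ ∑ S : Finset (Fin n), if S = ∅ then (k + 1 : ℝ) else 0 :=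
        sum_le_sum fun S _ => hterm S
    _ = k + 1 := by simp

theorem two_pow_mul_sum_sq_le (h : KWiseIndep n k p) (hp : ∀ x, 0 ≤ p x) (hnk : n ≤ 2 * k) :
    2 ^ n * ∑ x, p x ^ 2 ≤ k + 1 := by
  have hparseval := sum_walshCoeff_mul_walshCoeff p p
  have hdegree := two_mul_sum_card_mul_walshCoeff_sq_le hp
  have hlow := h.sum_sub_card_mul_walshCoeff_sq_le
  simp only [Fintype.card_fin, ← sq] at hparseval hdegree
  simp only [sub_mul, sum_sub_distrib, ← mul_sum, hparseval] at hlow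
  have hnk' : (n : ℝ) ≤ 2 * k := by exact_mod_cast hnk
  have hmass : 0 ≤ 2 ^ n * ∑ x, p x ^ 2 := by positivity
  have := mul_le_mul_of_nonneg_right hnk' hmass
  linarith

end KWiseIndep

theorem one_le_card_support_mul_sum_sq {α : Type*} [Fintype α] {p : α → ℝ}
    (hp : ∀ x, 0 ≤ p x) (hp1 : ∑ x, p x = 1) :
    1 ≤ #{x | 0 < p x} * ∑ x, p x ^ 2 := by
  have hsupp : ∑ x with 0 < p x, p x = 1 := by
    rw [sum_filter_of_ne fun x _ hx => (hp x).lt_of_ne' hx, hp1]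
  calc (1 : ℝ) = (∑ x with 0 < p x, p x) ^ 2 := by rw [hsupp, one_pow]
    _ ≤ (#{x | 0 < p x} : ℝ) * ∑ x with 0 < p x, p x ^ 2 := sq_sum_le_card_mul_sum_sq
    _ ≤ (#{x | 0 < p x} : ℝ) * ∑ x, p x ^ 2 := by
        gcongr
        exact subset_univ _

theorem support_of_half_wise_indep_general (n : ℕ) (heven : Even n)
    (p : (Fin n → Bool) → ℝ) (hp0 : ∀ x, 0 ≤ p x)
    (hindep : KWiseIndep n (n / 2) p) :
    ((Finset.univ.filter fun x => 0 < p x).card : ℝ) ≥ 2 ^ n / ((n : ℝ) + 1) := by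
  have hcollision := hindep.two_pow_mul_sum_sq_le hp0 (Nat.two_mul_div_two_of_even heven).ge
  have hsupport := one_le_card_support_mul_sum_sq hp0 hindep.sum_eq_one
  have hhalf : ((n / 2 : ℕ) : ℝ) ≤ n := by exact_mod_cast Nat.div_le_self n 2
  rw [ge_iff_le, div_le_iff₀ (by positivity)]
  calc (2 : ℝ) ^ n ≤ #{x | 0 < p x} * (2 ^ n * ∑ x, p x ^ 2) := by
        have := mul_le_mul_of_nonneg_left hsupport (by positivity : (0 : ℝ) ≤ 2 ^ n)
        linarith
    _ ≤ #{x | 0 < p x} * (n + 1) := by gcongr; linarith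

/-- If `X` is an `(n/2)`-wise independent random variable on `{0,1}^n` (`n` positive and
even), then its support has size at least `2^n/(n+1)`. -/
theorem support_of_half_wise_indep (n : ℕ) (hn : 0 < n) (heven : Even n)
    (p : (Fin n → Bool) → ℝ) (hp0 : ∀ x, 0 ≤ p x) (hp1 : ∑ x, p x = 1)
    (hindep : KWiseIndep n (n / 2) p) :
    ((Finset.univ.filter fun x => 0 < p x).card : ℝ) ≥ 2 ^ n / ((n : ℝ) + 1) :=
  support_of_half_wise_indep_general n heven p hp0 hindep
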